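/- arXiv:2206.00738 — 2 statements merged into one kernel-verified Lean document; each statement's English description precedes it below -/
import Mathlib

section
/- Basis Lemma: Let M be a set of constrained mode-declarations and T a set of type-definitions. Let ⟨C⟩ be an ordered clause in the mode-language L_{M,T} whose clause dependency-graph has exactly k sink literals, and let Basis(⟨C⟩) = {⟨S₁⟩, …, ⟨S_k⟩}. Then ⋃_{i=1}^{k} Set(S_i) = Set(C), i.e., the union of the maximal M-simple subclauses of ⟨C⟩, taken as sets of literals, equals C. -/
namespace CRM

/-- Terms of the vocabulary: variables or ground terms. -/
inductive Trm (V G : Type) : Type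
  | var : V → Trm V G
  | gnd : G → Trm V G

/-- An atom: a predicate symbol applied to a list of terms. -/
structure Atom (P V G : Type) : Type where
  pred : P
  args : List (Trm V G)

/-- An ordered clause: a head atom together with an ordered list of body atoms. -/
structure OClause (P V G : Type) : Type where
  head : Atom P V G
  body : List (Atom P V G)

/-- A literal: an atom with a sign (`true` = positive, `false` = negative). -/
abbrev Lit (P V G : Type) := Bool × Atom P V G

/-- `Set(C)`: the set of literals of a feature-clause, the head positive,
the body literals negated. -/
def litSet {P V G : Type} (C : OClause P V G) : Set (Lit P V G) :=
  insert (true, C.head) {l | ∃ a ∈ C.body, l = (false, a)}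

/-- Argument-place markings of a mode declaration: input, output or constant. -/
inductive IOMark : Type
  | inp | out | con

/-- A set of constrained mode-declarations: a distinguished unary head predicate `p`
with a single input argument of type `headType` (its `modeh` declaration), and for every
other predicate symbol exactly one body mode-declaration, given by `modeb` (MC1, MC3). -/
structure ModeDecls (P Γ : Type) : Type where
  headPred : P
  headType : Γ
  modeb : P → List (IOMark × Γ)

/-- MC2: every body mode-declaration contains at least one input argument. -/
structure Constrained {P Γ : Type} (M : ModeDecls P Γ) : Prop where
  body_has_input : ∀ q : P, q ≠ M.headPred → ∃ γ : Γ, (IOMark.inp, γ) ∈ M.modeb q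

variable {P V G Γ : Type}

/-- `v` is an input variable of type `γ` in the body atom `a` given its mode in `M`. -/
def bodyInput (M : ModeDecls P Γ) (a : Atom P V G) (v : V) (γ : Γ) : Prop :=
  ∃ i : ℕ, a.args[i]? = some (Trm.var v) ∧ (M.modeb a.pred)[i]? = some (IOMark.inp, γ)

/-- `v` is an output variable of type `γ` in the body atom `a` given its mode in `M`. -/
def bodyOutput (M : ModeDecls P Γ) (a : Atom P V G) (v : V) (γ : Γ) : Prop :=
  ∃ i : ℕ, a.args[i]? = some (Trm.var v) ∧ (M.modeb a.pred)[i]? = some (IOMark.out, γ)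

/-- `v` has type `γ` in some literal of the clause `C` (with head variable `X`). -/
def varHasType (M : ModeDecls P Γ) (X : V) (C : OClause P V G) (v : V) (γ : Γ) : Prop :=
  (v = X ∧ γ = M.headType) ∨
    ∃ a ∈ C.body, ∃ i : ℕ, ∃ mk : IOMark, a.args[i]? = some (Trm.var v) ∧
      (M.modeb a.pred)[i]? = some (mk, γ) ∧ mk ≠ IOMark.con

/-- Membership of an ordered feature-clause (with head `p(X)`) in the
mode-language `L_{M,T}`. -/
structure InModeLang (M : ModeDecls P Γ) (T : Γ → Set G) (X : V)
    (C : OClause P V G) : Prop where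
  head_pred : C.head.pred = M.headPred
  head_args : C.head.args = [Trm.var X]
  body_pred : ∀ a ∈ C.body, a.pred ≠ M.headPred
  arity : ∀ a ∈ C.body, a.args.length = (M.modeb a.pred).length
  io_var : ∀ a ∈ C.body, ∀ i : ℕ, ∀ mk γ, (M.modeb a.pred)[i]? = some (mk, γ) →
      mk ≠ IOMark.con → ∃ v : V, a.args[i]? = some (Trm.var v)
  con_gnd : ∀ a ∈ C.body, ∀ i : ℕ, ∀ γ, (M.modeb a.pred)[i]? = some (IOMark.con, γ) →
      ∃ g ∈ T γ, a.args[i]? = some (Trm.gnd g)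
  type_consistent : ∀ v γ γ', varHasType M X C v γ → varHasType M X C v γ' → γ = γ'
  ordering : ∀ j : ℕ, ∀ a, C.body[j]? = some a → ∀ v γ, bodyInput M a v γ →
      (v = X ∧ γ = M.headType) ∨
      ∃ i : ℕ, ∃ a', i < j ∧ C.body[i]? = some a' ∧ bodyOutput M a' v γ

/-- The edge relation of the clause dependency-graph `G_M(⟨C⟩)`.
Vertex `0` is the head literal; vertex `j ≥ 1` is the `j`-th body literal. -/
def depEdge (M : ModeDecls P Γ) (X : V) (C : OClause P V G) : ℕ → ℕ → Prop := fun i j =>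
  (i = 0 ∧ 1 ≤ j ∧ j ≤ C.body.length ∧
      ∃ a, C.body[j - 1]? = some a ∧ bodyInput M a X M.headType) ∨
  (1 ≤ i ∧ i < j ∧ j ≤ C.body.length ∧
      ∃ a b, C.body[i - 1]? = some a ∧ C.body[j - 1]? = some b ∧
        ∃ v γ, bodyOutput M a v γ ∧ bodyInput M b v γ)

/-- `i` indexes a vertex of the clause dependency-graph of `C`. -/
def isVertex (C : OClause P V G) (i : ℕ) : Prop := i ≤ C.body.length

/-- `i` is a sink vertex of the clause dependency-graph (no outgoing edge). -/
def isSink (M : ModeDecls P Γ) (X : V) (C : OClause P V G) (i : ℕ) : Prop :=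
  isVertex C i ∧ ∀ j : ℕ, ¬ depEdge M X C i j

/-- An `M`-simple feature-clause: a clause of `L_{M,T}` whose dependency-graph
has at most one sink vertex. -/
def MSimple (M : ModeDecls P Γ) (T : Γ → Set G) (X : V) (C : OClause P V G) : Prop :=
  InModeLang M T X C ∧ ∀ i j : ℕ, isSink M X C i → isSink M X C j → i = j

/-- Ordered subclause: the same head and a subsequence of the body literals. -/
def IsSubclause (C' C : OClause P V G) : Prop :=
  C'.head = C.head ∧ C'.body.Sublist C.body

/-- The literal labelling vertex `i` of the dependency-graph of `C`. -/
def litAt (C : OClause P V G) (i : ℕ) : Option (Atom P V G) := (C.head :: C.body)[i]?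

/-- `u` lies on a directed path from the source `0` to `v`, i.e. `u` is a vertex of
`DAG_{⟨C⟩}(v)`, the union of all paths from the source to `v`. -/
def InDAG (M : ModeDecls P Γ) (X : V) (C : OClause P V G) (v u : ℕ) : Prop :=
  Relation.ReflTransGen (depEdge M X C) 0 u ∧ Relation.ReflTransGen (depEdge M X C) u v

/-- `C'` is a maximal `M`-simple subclause of `C`: an ordered subclause whose clause
dependency-graph is isomorphic (by the order-preserving vertex map `e`, matching labels
and edges) to `DAG_{⟨C⟩}(v)` for some sink vertex `v` of `G_M(⟨C⟩)`. -/
def MaximalMSimpleSub (M : ModeDecls P Γ) (X : V) (C' C : OClause P V G) : Prop :=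
  IsSubclause C' C ∧
  ∃ v : ℕ, isSink M X C v ∧
    ∃ e : ℕ → ℕ,
      (∀ i j : ℕ, isVertex C' i → isVertex C' j → i < j → e i < e j) ∧
      (∀ i : ℕ, isVertex C' i → litAt C' i = litAt C (e i)) ∧
      (∀ u : ℕ, (∃ i : ℕ, isVertex C' i ∧ e i = u) ↔ InDAG M X C v u) ∧
      (∀ i j : ℕ, isVertex C' i → isVertex C' j →
        (depEdge M X C' i j ↔
          (depEdge M X C (e i) (e j) ∧ InDAG M X C v (e i) ∧ InDAG M X C v (e j))))

/-- `Basis(⟨C⟩)`: the set of all maximal `M`-simple subclauses of `⟨C⟩`. -/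
def Basis (M : ModeDecls P Γ) (X : V) (C : OClause P V G) : Set (OClause P V G) :=
  {C' | MaximalMSimpleSub M X C' C}

end CRM

def List.enum {α : Type*} (l : List α) : List (ℕ × α) := l.zipIdx.map Prod.swap

theorem List.mk_mem_enum_iff_getElem? {α : Type*} {i : ℕ} {x : α} {l : List α} :
    (i, x) ∈ l.enum ↔ l[i]? = some x := by
  unfold List.enum
  rw [List.mem_map]
  constructor
  · rintro ⟨⟨a, b⟩, h, he⟩
    simp only [Prod.swap_prod_mk, Prod.mk.injEq] at he
    obtain ⟨rfl, rfl⟩ := he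
    exact List.mk_mem_zipIdx_iff_getElem?.1 h
  · intro h
    exact ⟨(x, i), List.mk_mem_zipIdx_iff_getElem?.2 h, rfl⟩

theorem List.enum_map_fst {α : Type*} (l : List α) :
    List.map Prod.fst l.enum = List.range l.length := by
  rw [List.enum, List.map_map]
  show List.map Prod.snd l.zipIdx = _
  rw [List.zipIdx_map_snd, List.range_eq_range']

theorem List.enum_map_snd {α : Type*} (l : List α) :
    List.map Prod.snd l.enum = l := by
  rw [List.enum, List.map_map]
  show List.map Prod.fst l.zipIdx = _
  rw [List.zipIdx_map_fst]

namespace CRM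

section AuxLemmas

variable {P V G Γ : Type} (M : ModeDecls P Γ) (X : V) (C : OClause P V G)

lemma enum_getElem? {α : Type*} (l : List α) (p : ℕ × α) (h : p ∈ l.enum) :
    l[p.1]? = some p.2 := by
  obtain ⟨i, a⟩ := p
  rwa [List.mk_mem_enum_iff_getElem?] at h

lemma depEdge_lt_le {i j : ℕ} (h : depEdge M X C i j) :
    i < j ∧ j ≤ C.body.length := by
  rcases h with ⟨h0, h1, h2, -⟩ | ⟨h0, h1, h2, -⟩ <;> omega

lemma mem_of_getElem?_body {j : ℕ} {a : Atom P V G} (h : C.body[j]? = some a) :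
    a ∈ C.body := by
  obtain ⟨hj, rfl⟩ := List.getElem?_eq_some_iff.1 h
  exact List.getElem_mem hj

/-- Every vertex is reachable from the source `0`. -/
lemma reach_from_source (hM : Constrained M) {T : Γ → Set G}
    (hC : InModeLang M T X C) :
    ∀ u : ℕ, u ≤ C.body.length → Relation.ReflTransGen (depEdge M X C) 0 u := by
  intro u
  induction u using Nat.strong_induction_on with
  | _ u ih =>
    intro hu
    rcases Nat.eq_zero_or_pos u with h0 | h1
    · subst h0; exact Relation.ReflTransGen.refl
    · have hlen : u - 1 < C.body.length := by omega
      obtain ⟨a, ha⟩ : ∃ a, C.body[u - 1]? = some a :=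
        ⟨C.body[u - 1], List.getElem?_eq_getElem hlen⟩
      have hamem : a ∈ C.body := mem_of_getElem?_body C ha
      obtain ⟨γ, hin⟩ := hM.body_has_input a.pred (hC.body_pred a hamem)
      obtain ⟨i, hi⟩ := (List.mem_iff_getElem?).1 hin
      obtain ⟨w, hw⟩ := hC.io_var a hamem i IOMark.inp γ hi (by intro h; cases h)
      have hbi : bodyInput M a w γ := ⟨i, hw, hi⟩
      rcases hC.ordering (u - 1) a ha w γ hbi with ⟨hwX, hγ⟩ | ⟨i', a', hi'lt, hi'a, hout⟩
      · refine Relation.ReflTransGen.single (Or.inl ⟨rfl, h1, hu, a, ha, ?_⟩)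
        rw [← hwX, ← hγ]; exact hbi
      · have hlt : i' + 1 < u := by omega
        refine (ih (i' + 1) hlt (by omega)).tail
          (Or.inr ⟨by omega, hlt, hu, a', a, by simpa using hi'a, ha, w, γ, hout, hbi⟩)

/-- From every vertex some sink is reachable. -/
lemma reach_sink :
    ∀ d u : ℕ, u ≤ C.body.length → C.body.length - u ≤ d →
      ∃ v, isSink M X C v ∧ Relation.ReflTransGen (depEdge M X C) u v := by
  intro d
  induction d with
  | zero =>
    intro u hu hd
    refine ⟨u, ⟨hu, fun j hj => ?_⟩, Relation.ReflTransGen.refl⟩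
    have := depEdge_lt_le M X C hj; omega
  | succ d ih =>
    intro u hu hd
    by_cases h : ∀ j, ¬ depEdge M X C u j
    · exact ⟨u, ⟨hu, h⟩, Relation.ReflTransGen.refl⟩
    · push_neg at h
      obtain ⟨j, hj⟩ := h
      have hlt := depEdge_lt_le M X C hj
      obtain ⟨v, hv, hr⟩ := ih j hlt.2 (by omega)
      exact ⟨v, hv, Relation.ReflTransGen.head hj hr⟩

lemma le_of_rtg {u w : ℕ} (h : Relation.ReflTransGen (depEdge M X C) u w)
    (hw : w ≤ C.body.length) : u ≤ C.body.length := by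
  rcases Relation.ReflTransGen.cases_head h with rfl | ⟨x, hx, -⟩
  · exact hw
  · exact le_of_lt (lt_of_lt_of_le (depEdge_lt_le M X C hx).1 (depEdge_lt_le M X C hx).2)

open Classical in
/-- For every sink `v` there is a maximal `M`-simple subclause (with label-matched
dependency-DAG), and it contains every body atom lying in `DAG(v)`. -/
lemma exists_maximal (hM : Constrained M) {T : Γ → Set G} (hC : InModeLang M T X C)
    {v : ℕ} (hv : isSink M X C v) :
    ∃ C' : OClause P V G, MaximalMSimpleSub M X C' C ∧ C'.head = C.head ∧
      ∀ u a, InDAG M X C v u → C.body[u - 1]? = some a → 1 ≤ u → a ∈ C'.body := by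
  set n := C.body.length with hn
  set D : ℕ → Prop := InDAG M X C v with hD
  set pb : ℕ × Atom P V G → Bool := fun x => decide (D (x.1 + 1)) with hpb
  set E : List (ℕ × Atom P V G) := C.body.enum.filter pb with hE
  set m : ℕ := E.length with hm
  set B : List (Atom P V G) := E.map Prod.snd with hB
  set C' : OClause P V G := ⟨C.head, B⟩ with hC'
  have hBlen : B.length = m := by simp [hB, hm]
  -- basic facts about entries of E
  have hmem : ∀ t (ht : t < m), C.body[(E[t]).1]? = some (E[t]).2 ∧
      D ((E[t]).1 + 1) ∧ (E[t]).1 < n := by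
    intro t ht
    have h1 : E[t] ∈ E := List.getElem_mem ht
    obtain ⟨h2, h3⟩ := List.mem_filter.1 h1
    have h4 : C.body[(E[t]).1]? = some (E[t]).2 := enum_getElem? C.body _ h2
    refine ⟨h4, of_decide_eq_true h3, ?_⟩
    obtain ⟨h5, -⟩ := List.getElem?_eq_some_iff.1 h4
    exact h5
  -- E is sorted by first components
  have hsorted : ∀ t s (ht : t < m) (hs : s < m), t < s → (E[t]).1 < (E[s]).1 := by
    have hp : List.Pairwise (fun a b : ℕ × Atom P V G => a.1 < b.1) C.body.enum := by
      have := List.pairwise_lt_range (n := C.body.length)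
      rw [← List.enum_map_fst C.body, List.pairwise_map] at this
      exact this
    have hp2 : List.Pairwise (fun a b : ℕ × Atom P V G => a.1 < b.1) E :=
      hp.sublist List.filter_sublist
    rw [List.pairwise_iff_getElem] at hp2
    intro t s ht hs hts
    exact hp2 t s ht hs hts
  -- every DAG index occurs in E
  have hFmem : ∀ j, j < n → D (j + 1) → ∃ t, ∃ ht : t < m, (E[t]).1 = j := by
    intro j hj hDj
    have hja : (j, C.body[j]) ∈ C.body.enum := by
      rw [List.mk_mem_enum_iff_getElem?]; exact List.getElem?_eq_getElem hj
    have hjE : (j, C.body[j]) ∈ E := by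
      rw [hE, List.mem_filter]
      exact ⟨hja, decide_eq_true hDj⟩
    obtain ⟨t, ht, hteq⟩ := List.mem_iff_getElem.1 hjE
    exact ⟨t, ht, by rw [hteq]⟩
  have hD0 : D 0 :=
    ⟨Relation.ReflTransGen.refl, reach_from_source M X C hM hC v hv.1⟩
  have hDle : ∀ u, D u → u ≤ n := fun u hu => le_of_rtg M X C hu.2 hv.1
  -- the vertex map
  set e : ℕ → ℕ := fun i => if h : 0 < i ∧ i - 1 < m then (E[i - 1]'h.2).1 + 1 else 0
    with he
  have he0 : e 0 = 0 := by simp [he]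
  have heS : ∀ t (ht : t < m), e (t + 1) = (E[t]).1 + 1 := by
    intro t ht
    simp only [he]
    rw [dif_pos ⟨Nat.succ_pos t, by simpa using ht⟩]
    simp
  have hvert : ∀ i, isVertex C' i ↔ i ≤ m := by
    intro i; unfold isVertex; rw [hC']; simp [hBlen]
  have hBidx : ∀ t (ht : t < m), C'.body[t]? = some (E[t]).2 := by
    intro t ht
    show B[t]? = _
    rw [hB, List.getElem?_map, List.getElem?_eq_getElem ht]
    rfl
  -- containment
  have hcontain : ∀ u a, D u → C.body[u - 1]? = some a → 1 ≤ u → a ∈ C'.body := by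
    intro u a hDu ha hu
    obtain ⟨w, rfl⟩ : ∃ w, u = w + 1 := ⟨u - 1, by omega⟩
    have hwn : w < n := by have := hDle _ hDu; omega
    obtain ⟨t, ht, hteq⟩ := hFmem w hwn (by simpa using hDu)
    have h1 := (hmem t ht).1
    rw [hteq] at h1
    simp only [Nat.add_sub_cancel] at ha
    rw [ha] at h1
    have h2 : (E[t]).2 = a := by injection h1.symm
    rw [← h2]
    exact List.mem_map_of_mem (f := Prod.snd) (List.getElem_mem ht)
  refine ⟨C', ⟨⟨rfl, ?_⟩, v, hv, e, ?_, ?_, ?_, ?_⟩, rfl, hcontain⟩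
  -- sublist
  · show B.Sublist C.body
    rw [hB]
    have := (List.filter_sublist (p := pb) (l := C.body.enum)).map Prod.snd
    rwa [List.enum_map_snd] at this
  -- strict monotone
  · intro i j hi hj hij
    rw [hvert] at hi hj
    obtain ⟨t, rfl⟩ : ∃ t, j = t + 1 := ⟨j - 1, by omega⟩
    have htm : t < m := by omega
    rcases Nat.eq_zero_or_pos i with rfl | hi1
    · rw [he0, heS t htm]; omega
    · obtain ⟨s, rfl⟩ : ∃ s, i = s + 1 := ⟨i - 1, by omega⟩
      have hsm : s < m := by omega
      rw [heS s hsm, heS t htm]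
      have := hsorted s t hsm htm (by omega)
      omega
  -- labels
  · intro i hi
    rw [hvert] at hi
    rcases Nat.eq_zero_or_pos i with rfl | hi1
    · rw [he0]; simp [litAt, hC']
    · obtain ⟨t, rfl⟩ : ∃ t, i = t + 1 := ⟨i - 1, by omega⟩
      have htm : t < m := by omega
      rw [heS t htm]
      show (C'.head :: C'.body)[t + 1]? = (C.head :: C.body)[(E[t]).1 + 1]?
      rw [List.getElem?_cons_succ, List.getElem?_cons_succ, hBidx t htm, (hmem t htm).1]
  -- range of e = DAG
  · intro u
    constructor
    · rintro ⟨i, hi, rfl⟩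
      rw [hvert] at hi
      rcases Nat.eq_zero_or_pos i with rfl | hi1
      · rw [he0]; exact hD0
      · obtain ⟨t, rfl⟩ : ∃ t, i = t + 1 := ⟨i - 1, by omega⟩
        have htm : t < m := by omega
        rw [heS t htm]
        exact (hmem t htm).2.1
    · intro hu
      rcases Nat.eq_zero_or_pos u with rfl | hu1
      · exact ⟨0, by rw [hvert]; omega, he0⟩
      · obtain ⟨w, rfl⟩ : ∃ w, u = w + 1 := ⟨u - 1, by omega⟩
        have hwn : w < n := by have := hDle _ hu; omega
        obtain ⟨t, ht, hteq⟩ := hFmem w hwn (by simpa using hu)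
        exact ⟨t + 1, by rw [hvert]; omega, by rw [heS t ht, hteq]⟩
  -- edges
  · intro i j hi hj
    rw [hvert] at hi hj
    have hrange : ∀ i', i' ≤ m → D (e i') := by
      intro i' hi'
      rcases Nat.eq_zero_or_pos i' with rfl | h1
      · rw [he0]; exact hD0
      · obtain ⟨t, rfl⟩ : ∃ t, i' = t + 1 := ⟨i' - 1, by omega⟩
        have htm : t < m := by omega
        rw [heS t htm]; exact (hmem t htm).2.1
    constructor
    · rintro (⟨hi0, hj1, hjle, a, ha, hin⟩ | ⟨hi1, hij, hjle, a, b, ha, hb, w, γ, hout, hin⟩)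
      · -- head edge
        rw [hBlen] at hjle
        obtain ⟨t, rfl⟩ : ∃ t, j = t + 1 := ⟨j - 1, by omega⟩
        have htm : t < m := by omega
        have ha2 : a = (E[t]).2 := by
          have := hBidx t htm
          simp only [Nat.add_sub_cancel] at ha
          rw [ha] at this; injection this
        refine ⟨?_, hrange i hi, hrange (t + 1) (by omega)⟩
        subst hi0
        rw [he0, heS t htm]
        refine Or.inl ⟨rfl, by omega, by have := (hmem t htm).2.2; omega, a, ?_, hin⟩
        simp only [Nat.add_sub_cancel]
        rw [ha2]; exact (hmem t htm).1
      · -- body edge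
        rw [hBlen] at hjle
        obtain ⟨t, rfl⟩ : ∃ t, j = t + 1 := ⟨j - 1, by omega⟩
        obtain ⟨s, rfl⟩ : ∃ s, i = s + 1 := ⟨i - 1, by omega⟩
        have htm : t < m := by omega
        have hsm : s < m := by omega
        have ha2 : a = (E[s]).2 := by
          have := hBidx s hsm
          simp only [Nat.add_sub_cancel] at ha
          rw [ha] at this; injection this
        have hb2 : b = (E[t]).2 := by
          have := hBidx t htm
          simp only [Nat.add_sub_cancel] at hb
          rw [hb] at this; injection this
        refine ⟨?_, hrange (s + 1) (by omega), hrange (t + 1) (by omega)⟩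
        rw [heS s hsm, heS t htm]
        refine Or.inr ⟨by omega, by have := hsorted s t hsm htm (by omega); omega,
          by have := (hmem t htm).2.2; omega, a, b, ?_, ?_, w, γ, hout, hin⟩
        · simp only [Nat.add_sub_cancel]; rw [ha2]; exact (hmem s hsm).1
        · simp only [Nat.add_sub_cancel]; rw [hb2]; exact (hmem t htm).1
    · rintro ⟨(⟨hi0, hj1, hjle, a, ha, hin⟩ | ⟨hi1, hij, hjle, a, b, ha, hb, w, γ, hout, hin⟩), -, -⟩
      · -- head edge
        have hieq : i = 0 := by
          by_contra h
          obtain ⟨s, rfl⟩ : ∃ s, i = s + 1 := ⟨i - 1, by omega⟩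
          rw [heS s (by omega)] at hi0
          omega
        obtain ⟨t, rfl⟩ : ∃ t, j = t + 1 := by
          rcases Nat.eq_zero_or_pos j with rfl | h1
          · rw [he0] at hj1; omega
          · exact ⟨j - 1, by omega⟩
        have htm : t < m := by omega
        rw [heS t htm] at ha
        simp only [Nat.add_sub_cancel] at ha
        have ha2 : a = (E[t]).2 := by
          have := (hmem t htm).1
          rw [ha] at this; injection this
        subst hieq
        refine Or.inl ⟨rfl, by omega, by rw [hBlen]; omega, a, ?_, hin⟩
        simp only [Nat.add_sub_cancel]
        rw [ha2]; exact hBidx t htm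
      · -- body edge
        obtain ⟨s, rfl⟩ : ∃ s, i = s + 1 := by
          rcases Nat.eq_zero_or_pos i with rfl | h1
          · rw [he0] at hi1; omega
          · exact ⟨i - 1, by omega⟩
        obtain ⟨t, rfl⟩ : ∃ t, j = t + 1 := by
          rcases Nat.eq_zero_or_pos j with rfl | h1
          · rw [he0] at hij; rw [heS s (by omega)] at hij; omega
          · exact ⟨j - 1, by omega⟩
        have hsm : s < m := by omega
        have htm : t < m := by omega
        rw [heS s hsm] at ha hij hi1
        rw [heS t htm] at hb hij
        simp only [Nat.add_sub_cancel] at ha hb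
        have hst : s < t := by
          rcases lt_trichotomy s t with h | rfl | h
          · exact h
          · omega
          · have := hsorted t s htm hsm h; omega
        have ha2 : a = (E[s]).2 := by
          have := (hmem s hsm).1; rw [ha] at this; injection this
        have hb2 : b = (E[t]).2 := by
          have := (hmem t htm).1; rw [hb] at this; injection this
        refine Or.inr ⟨by omega, by omega, by rw [hBlen]; omega, a, b, ?_, ?_, w, γ, hout, hin⟩
        · simp only [Nat.add_sub_cancel]; rw [ha2]; exact hBidx s hsm
        · simp only [Nat.add_sub_cancel]; rw [hb2]; exact hBidx t htm

end AuxLemmas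

/-- **Basis Lemma.** If `⟨C⟩` is an ordered clause in the mode-language `L_{M,T}`
whose clause dependency-graph has exactly `k` sink vertices, and
`Basis(⟨C⟩) = {S 0, …, S (k-1)}`, then `⋃ i, Set(S i) = Set(C)`. -/
theorem basis_lemma {P V G Γ : Type} (M : ModeDecls P Γ) (hM : Constrained M)
    (T : Γ → Set G) (X : V) (C : OClause P V G) (hC : InModeLang M T X C)
    (k : ℕ) (hsinks : {i : ℕ | isSink M X C i}.ncard = k)
    (S : Fin k → OClause P V G) (hSinj : Function.Injective S)
    (hBasis : Basis M X C = Set.range S) :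
    (⋃ i : Fin k, litSet (S i)) = litSet C := by
  ext l
  simp only [Set.mem_iUnion]
  constructor
  · rintro ⟨i, hl⟩
    have hS : MaximalMSimpleSub M X (S i) C := by
      have : S i ∈ Basis M X C := by rw [hBasis]; exact ⟨i, rfl⟩
      exact this
    obtain ⟨⟨hh, hb⟩, -⟩ := hS
    rcases Set.mem_insert_iff.1 hl with rfl | ⟨a, ha, rfl⟩
    · rw [hh]; exact Set.mem_insert _ _
    · exact Set.mem_insert_iff.2 (Or.inr ⟨a, hb.subset ha, rfl⟩)
  · intro hl
    rcases Set.mem_insert_iff.1 hl with rfl | ⟨a, ha, rfl⟩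
    · obtain ⟨v, hv, -⟩ :=
        reach_sink M X C C.body.length 0 (Nat.zero_le _) (by omega)
      obtain ⟨C', hC'max, hh, -⟩ := exists_maximal M X C hM hC hv
      have hmem : C' ∈ Set.range S := by rw [← hBasis]; exact hC'max
      obtain ⟨i, rfl⟩ := hmem
      exact ⟨i, Set.mem_insert_iff.2 (Or.inl (by rw [hh]))⟩
    · obtain ⟨j, hj⟩ := List.mem_iff_getElem?.1 ha
      have hjn : j < C.body.length := (List.getElem?_eq_some_iff.1 hj).1
      obtain ⟨v, hv, hr⟩ :=
        reach_sink M X C C.body.length (j + 1) (by omega) (by omega)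
      have hD : InDAG M X C v (j + 1) :=
        ⟨reach_from_source M X C hM hC (j + 1) (by omega), hr⟩
      obtain ⟨C', hC'max, -, hcont⟩ := exists_maximal M X C hM hC hv
      have hamem : a ∈ C'.body := hcont (j + 1) a hD (by simpa using hj) (by omega)
      have hmem : C' ∈ Set.range S := by rw [← hBasis]; exact hC'max
      obtain ⟨i, rfl⟩ := hmem
      exact ⟨i, Set.mem_insert_iff.2 (Or.inr ⟨a, hamem, rfl⟩)⟩

end CRM
end

section
/- Reordering Lemma: Let Φ be a set of ordered feature-clauses. If an ordered clause ⟨C⟩ is derivable from Φ using {ρ₁, ρ₂}, then there exist ordered clauses ⟨C_j⟩ and ⟨C_k⟩ such that (a) ⟨C_j⟩ is derivable from Φ using {ρ₂} only, (b) ⟨C_k⟩ is derivable from {⟨C_j⟩} using {ρ₁} only, and (c) C_k ≡ C. -/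
namespace CRM

variable {P V G Γ : Type}

/-- Applying a substitution to a term. -/
def substTrm (σ : V → Trm V G) : Trm V G → Trm V G
  | Trm.var v => σ v
  | Trm.gnd g => Trm.gnd g

/-- Applying a substitution to an atom. -/
def substAtom (σ : V → Trm V G) (a : Atom P V G) : Atom P V G :=
  ⟨a.pred, a.args.map (substTrm σ)⟩

/-- Applying a substitution to an ordered clause. -/
def substClause (σ : V → Trm V G) (C : OClause P V G) : OClause P V G :=
  ⟨substAtom σ C.head, C.body.map (substAtom σ)⟩

/-- The variables of a term. -/
def trmVars : Trm V G → Set V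
  | Trm.var v => {v}
  | Trm.gnd _ => ∅

/-- The variables of an atom. -/
def atomVars (a : Atom P V G) : Set V := ⋃ t ∈ a.args, trmVars t

/-- The variables of an ordered clause. -/
def clauseVars (C : OClause P V G) : Set V :=
  atomVars C.head ∪ ⋃ a ∈ C.body, atomVars a

/-- Evaluation of a term in a structure with domain `D` under a valuation. -/
def evalTrm {D : Type} (ig : G → D) (val : V → D) : Trm V G → D
  | Trm.var v => val v
  | Trm.gnd g => ig g

/-- Truth of an atom in a structure under a valuation. -/
def atomTrue {D : Type} (ip : P → List D → Prop) (ig : G → D) (val : V → D)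
    (a : Atom P V G) : Prop :=
  ip a.pred (a.args.map (evalTrm ig val))

/-- Truth, in a structure, of the universal closure of the disjunction of the
literals of a clause `C` (head positive, body literals negated). -/
def clauseTrue {D : Type} (ip : P → List D → Prop) (ig : G → D)
    (C : OClause P V G) : Prop :=
  ∀ val : V → D, atomTrue ip ig val C.head ∨ ∃ a ∈ C.body, ¬ atomTrue ip ig val a

/-- Logical equivalence of clauses: truth in exactly the same structures, the
equality predicate `eqp` being interpreted as identity. -/
def ClauseEquiv (eqp : P) (C C' : OClause P V G) : Prop :=
  ∀ (D : Type) (ip : P → List D → Prop) (ig : G → D),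
    (∀ x y : D, ip eqp [x, y] ↔ x = y) →
    (clauseTrue ip ig C ↔ clauseTrue ip ig C')

/-- The operator `ρ₁`: add an equality between two output variables of the same type
occurring in the body. -/
def rho1 (M : ModeDecls P Γ) (eqp : P) (C : OClause P V G) : Set (OClause P V G) :=
  {D | ∃ Y₁ Y₂ : V, ∃ γ : Γ,
    (∃ a ∈ C.body, bodyOutput M a Y₁ γ) ∧ (∃ a ∈ C.body, bodyOutput M a Y₂ γ) ∧
    D = ⟨C.head, C.body ++ [⟨eqp, [Trm.var Y₁, Trm.var Y₂]⟩]⟩}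

/-- The operator `ρ₂`: conjoin the bodies of two clauses with the same head `p(X)`. -/
def rho2 (C₁ C₂ : OClause P V G) : Set (OClause P V G) :=
  {D | C₁.head = C₂.head ∧ D = ⟨C₁.head, C₁.body ++ C₂.body⟩}

/-- A single admissible step of a derivation sequence: `C` is an instance of an element
of `Φ` introducing no variables (other than `X`) occurring earlier in the sequence, or
(`r1` allowed) an element of `ρ₁` of an earlier clause, or (`r2` allowed) an element of
`ρ₂` of two earlier clauses. -/
def DerivStep (M : ModeDecls P Γ) (eqp : P) (X : V) (Φ : Set (OClause P V G))
    (r1 r2 : Prop) (prev : List (OClause P V G)) (C : OClause P V G) : Prop :=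
  (∃ E ∈ Φ, ∃ σ : V → Trm V G, C = substClause σ E ∧
      ∀ v ∈ clauseVars C, v ≠ X → ∀ D ∈ prev, v ∉ clauseVars D) ∨
  (r1 ∧ ∃ D ∈ prev, C ∈ rho1 M eqp D) ∨
  (r2 ∧ ∃ D₁ ∈ prev, ∃ D₂ ∈ prev, C ∈ rho2 D₁ D₂)

/-- A derivation sequence from `Φ` using `Ω ⊆ {ρ₁, ρ₂}` (flags `r1`, `r2`). -/
def IsDerivSeq (M : ModeDecls P Γ) (eqp : P) (X : V) (Φ : Set (OClause P V G))
    (r1 r2 : Prop) (seq : List (OClause P V G)) : Prop :=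
  ∀ i : ℕ, ∀ C, seq[i]? = some C → DerivStep M eqp X Φ r1 r2 (seq.take i) C

/-- `C` is derivable from `Φ` using the allowed operators iff some derivation
sequence ends in `C`. -/
def Derivable (M : ModeDecls P Γ) (eqp : P) (X : V) (Φ : Set (OClause P V G))
    (r1 r2 : Prop) (C : OClause P V G) : Prop :=
  ∃ seq : List (OClause P V G), IsDerivSeq M eqp X Φ r1 r2 seq ∧ seq.getLast? = some C

/-- `C` θ-subsumes `D`: some substitution instance of `C` is a subset of `D`
as sets of literals. -/
def Subsumes (C D : OClause P V G) : Prop :=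
  ∃ σ : V → Trm V G, litSet (substClause σ C) ⊆ litSet D

end CRM

namespace CRM

/-! ### Auxiliary lemmas for the Reordering Lemma -/

section Aux

variable {P V G Γ : Type}

lemma mem_take_iff' {α : Type*} {l : List α} {n : ℕ} {a : α} :
    a ∈ l.take n ↔ ∃ s, s < n ∧ l[s]? = some a := by
  rw [List.mem_iff_getElem?]
  constructor
  · rintro ⟨s, hs⟩
    rw [List.getElem?_take] at hs
    by_cases h : s < n
    · exact ⟨s, h, by simpa [h] using hs⟩
    · simp [h] at hs
  · rintro ⟨s, h1, h2⟩
    exact ⟨s, by simp [List.getElem?_take, h1, h2]⟩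

lemma substTrm_id' : (substTrm (Trm.var : V → Trm V G)) = id := by
  funext t; cases t <;> rfl

lemma substAtom_id' (a : Atom P V G) : substAtom Trm.var a = a := by
  cases a; simp [substAtom, substTrm_id', List.map_id]

lemma substClause_id' (C : OClause P V G) : substClause Trm.var C = C := by
  cases C with
  | mk hd bd =>
    have h : substAtom (Trm.var : V → Trm V G) = (id : Atom P V G → Atom P V G) :=
      funext substAtom_id'
    simp [substClause, h, List.map_id, substAtom_id']

lemma clauseVars_subset {A B : OClause P V G} (hh : A.head = B.head)
    (hb : ∀ a ∈ A.body, a ∈ B.body) : clauseVars A ⊆ clauseVars B := by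
  intro v hv
  rcases hv with hv | hv
  · exact Or.inl (hh ▸ hv)
  · obtain ⟨a, ha, hva⟩ := Set.mem_iUnion₂.mp hv
    exact Or.inr (Set.mem_iUnion₂.mpr ⟨a, hb a ha, hva⟩)

lemma clauseEquiv_of_mem (eqp : P) {A B : OClause P V G} (hh : A.head = B.head)
    (hb : ∀ a, a ∈ A.body ↔ a ∈ B.body) : ClauseEquiv eqp A B := by
  intro D ip ig _
  constructor <;> intro h val <;> rcases h val with h' | ⟨a, ha, hna⟩
  · exact Or.inl (hh ▸ h')
  · exact Or.inr ⟨a, (hb a).mp ha, hna⟩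
  · exact Or.inl (hh ▸ h')
  · exact Or.inr ⟨a, (hb a).mpr ha, hna⟩

/-- The equality atoms `E` can be added one by one by `ρ₁` on top of the body `B`. -/
def EOk (M : ModeDecls P Γ) (eqp : P) (B E : List (Atom P V G)) : Prop :=
  ∀ t e, E[t]? = some e → ∃ Y₁ Y₂ : V, ∃ γ : Γ,
    e = ⟨eqp, [Trm.var Y₁, Trm.var Y₂]⟩ ∧
    (∃ a ∈ B ++ E.take t, bodyOutput M a Y₁ γ) ∧
    (∃ a ∈ B ++ E.take t, bodyOutput M a Y₂ γ)

lemma EOk_mono {M : ModeDecls P Γ} {eqp : P} {B B' E : List (Atom P V G)}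
    (h : EOk M eqp B E) (hs : ∀ a ∈ B, a ∈ B') : EOk M eqp B' E := by
  intro t e he
  obtain ⟨Y₁, Y₂, γ, h1, ⟨a1, ha1, ho1⟩, ⟨a2, ha2, ho2⟩⟩ := h t e he
  have move : ∀ a : Atom P V G, a ∈ B ++ E.take t → a ∈ B' ++ E.take t := by
    intro a ha
    rcases List.mem_append.mp ha with h' | h'
    · exact List.mem_append.mpr (Or.inl (hs _ h'))
    · exact List.mem_append.mpr (Or.inr h')
  exact ⟨Y₁, Y₂, γ, h1, ⟨a1, move _ ha1, ho1⟩, ⟨a2, move _ ha2, ho2⟩⟩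

lemma EOk_append {M : ModeDecls P Γ} {eqp : P} {B E₁ E₂ : List (Atom P V G)}
    (h1 : EOk M eqp B E₁) (h2 : EOk M eqp (B ++ E₁) E₂) :
    EOk M eqp B (E₁ ++ E₂) := by
  intro t e he
  rcases lt_or_ge t E₁.length with ht | ht
  · rw [List.getElem?_append, if_pos ht] at he
    obtain ⟨Y₁, Y₂, γ, h1', w1, w2⟩ := h1 t e he
    rw [List.take_append_of_le_length (le_of_lt ht)]
    exact ⟨Y₁, Y₂, γ, h1', w1, w2⟩
  · obtain ⟨s, rfl⟩ : ∃ s, t = E₁.length + s := ⟨t - E₁.length, by omega⟩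
    rw [List.getElem?_append_right ht, Nat.add_sub_cancel_left] at he
    obtain ⟨Y₁, Y₂, γ, h1', ⟨a1, ha1, ho1⟩, ⟨a2, ha2, ho2⟩⟩ := h2 s e he
    rw [List.take_length_add_append]
    rw [List.append_assoc] at ha1 ha2
    exact ⟨Y₁, Y₂, γ, h1', ⟨a1, ha1, ho1⟩, ⟨a2, ha2, ho2⟩⟩

lemma perm_middle4 {α : Type*} (A B Cc D : List α) :
    ((A ++ B) ++ (Cc ++ D)).Perm ((A ++ Cc) ++ (B ++ D)) := by
  rw [List.append_assoc, List.append_assoc]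
  refine List.Perm.append_left A ?_
  rw [← List.append_assoc, ← List.append_assoc]
  exact List.perm_append_comm.append_right D

lemma isDerivSeq_take {M : ModeDecls P Γ} {eqp : P} {X : V} {Φ : Set (OClause P V G)}
    {r1 r2 : Prop} {seq : List (OClause P V G)}
    (h : IsDerivSeq M eqp X Φ r1 r2 seq) (k : ℕ) :
    IsDerivSeq M eqp X Φ r1 r2 (seq.take k) := by
  intro i C hC
  rw [List.getElem?_take] at hC
  by_cases hik : i < k
  · rw [if_pos hik] at hC
    have := h i C hC
    rwa [List.take_take, min_eq_left (le_of_lt hik)]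
  · rw [if_neg hik] at hC; exact absurd hC (by simp)

lemma isDerivSeq_append {M : ModeDecls P Γ} {eqp : P} {X : V} {Φ : Set (OClause P V G)}
    {r1 r2 : Prop} {seq : List (OClause P V G)} {C : OClause P V G}
    (h : IsDerivSeq M eqp X Φ r1 r2 seq)
    (hC : DerivStep M eqp X Φ r1 r2 seq C) :
    IsDerivSeq M eqp X Φ r1 r2 (seq ++ [C]) := by
  intro i D hD
  rcases lt_trichotomy i seq.length with hi | hi | hi
  · rw [List.getElem?_append, if_pos hi] at hD
    rw [List.take_append_of_le_length (le_of_lt hi)]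
    exact h i D hD
  · subst hi
    rw [List.getElem?_concat_length] at hD
    obtain rfl : C = D := by injection hD
    rw [List.take_append_of_le_length le_rfl, List.take_length]
    exact hC
  · exfalso
    rw [List.getElem?_eq_none (by simp; omega)] at hD
    cases hD

lemma varsInv_extend {seq seq' : List (OClause P V G)} {W Cn : OClause P V G}
    (h : ∀ (s : ℕ) (A B : OClause P V G), seq'[s]? = some A → seq[s]? = some B → clauseVars A ⊆ clauseVars B)
    (hCn : seq[seq'.length]? = some Cn) (hW : clauseVars W ⊆ clauseVars Cn) :
    ∀ (s : ℕ) (A B : OClause P V G), (seq' ++ [W])[s]? = some A → seq[s]? = some B →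
      clauseVars A ⊆ clauseVars B := by
  intro s A B hA hB
  rw [List.getElem?_append] at hA
  split_ifs at hA with hs
  · exact h s A B hA hB
  · rcases Nat.eq_or_lt_of_le (Nat.le_of_not_lt hs) with hs' | hs'
    · obtain rfl : s = seq'.length := hs'.symm
      rw [Nat.sub_self] at hA
      obtain rfl : W = A := by simpa using hA
      rw [hCn] at hB
      obtain rfl : Cn = B := by injection hB
      exact hW
    · exfalso
      rw [List.getElem?_eq_none (by simp; omega)] at hA
      cases hA

/-- Main invariant: every prefix of a `{ρ₁,ρ₂}`-derivation can be matched by a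
`{ρ₂}`-only derivation together with postponed equality atoms. -/
lemma key_invariant {M : ModeDecls P Γ} {eqp : P} {X : V} {Φ : Set (OClause P V G)}
    {seq : List (OClause P V G)}
    (hseq : IsDerivSeq M eqp X Φ True True seq) :
    ∀ n, n ≤ seq.length → ∃ seq' : List (OClause P V G),
      seq'.length = n ∧
      IsDerivSeq M eqp X Φ False True seq' ∧
      (∀ (s : ℕ) (A B : OClause P V G), seq'[s]? = some A → seq[s]? = some B →
        clauseVars A ⊆ clauseVars B) ∧
      (∀ i Ci, i < n → seq[i]? = some Ci → ∃ d, d ≤ i ∧ ∃ Cj E,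
        seq'[d]? = some Cj ∧ Cj.head = Ci.head ∧
        Ci.body.Perm (Cj.body ++ E) ∧ EOk M eqp Cj.body E) := by
  intro n
  induction n with
  | zero =>
    intro _
    refine ⟨[], rfl, ?_, ?_, ?_⟩
    · intro i C hC; simp at hC
    · intro s A B hA _; simp at hA
    · intro i Ci hi _; omega
  | succ n ih =>
    intro hn
    obtain ⟨seq', hlen, hds, hvars, hinv⟩ := ih (Nat.le_of_succ_le hn)
    have hnlt : n < seq.length := hn
    obtain ⟨Cn, hCn⟩ : ∃ Cn, seq[n]? = some Cn := by
      rw [List.getElem?_eq_getElem hnlt]; exact ⟨_, rfl⟩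
    have hCn' : seq[seq'.length]? = some Cn := by rwa [hlen]
    -- helper for extending the old invariant
    have hold : ∀ {k : ℕ} {A : OClause P V G} (W : OClause P V G), seq'[k]? = some A →
        (seq' ++ [W])[k]? = some A := by
      intro k A W hk
      have : k < seq'.length := (List.getElem?_eq_some_iff.mp hk).1
      rw [List.getElem?_append, if_pos this]; exact hk
    have hstep := hseq n Cn hCn
    rcases hstep with ⟨Ephi, hEphi, σ, hsub, hfresh⟩ | ⟨-, D, hDmem, hρ1⟩ |
      ⟨-, D₁, hD1, D₂, hD2, hρ2⟩
    · -- instance of an element of Φ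
      refine ⟨seq' ++ [Cn], by simp [hlen], ?_, ?_, ?_⟩
      · refine isDerivSeq_append hds (Or.inl ⟨Ephi, hEphi, σ, hsub, ?_⟩)
        intro v hv hvX D hD
        obtain ⟨s, hs⟩ := List.mem_iff_getElem?.mp hD
        have hslt : s < n := by
          have := (List.getElem?_eq_some_iff.mp hs).1; omega
        obtain ⟨B, hB⟩ : ∃ B, seq[s]? = some B := by
          rw [List.getElem?_eq_getElem (by omega)]; exact ⟨_, rfl⟩
        have hvB := hfresh v hv hvX B (mem_take_iff'.mpr ⟨s, hslt, hB⟩)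
        exact fun hvD => hvB (hvars s D B hs hB hvD)
      · exact varsInv_extend hvars hCn' subset_rfl
      · intro i Ci hi hCi
        rcases Nat.lt_succ_iff_lt_or_eq.mp hi with hi' | rfl
        · obtain ⟨d, hd, Cj, E, hg, hh, hp, hE⟩ := hinv i Ci hi' hCi
          exact ⟨d, hd, Cj, E, hold _ hg, hh, hp, hE⟩
        · obtain rfl : Cn = Ci := by rw [hCn] at hCi; injection hCi
          refine ⟨seq'.length, by omega, Cn, [], ?_, rfl, by simp, ?_⟩
          · rw [List.getElem?_concat_length]
          · intro t e ht; simp at ht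
    · -- ρ₁ step
      obtain ⟨d₀, hd₀n, hDg⟩ := mem_take_iff'.mp hDmem
      obtain ⟨Y₁, Y₂, γ, ⟨a1, ha1, ho1⟩, ⟨a2, ha2, ho2⟩, hCnEq⟩ := hρ1
      obtain ⟨d, hdd₀, Cj, E, hg, hh, hp, hE⟩ := hinv d₀ D hd₀n hDg
      set e : Atom P V G := ⟨eqp, [Trm.var Y₁, Trm.var Y₂]⟩ with he_def
      set W : OClause P V G := ⟨Cj.head, Cj.body ++ Cj.body⟩ with hW_def
      have hCjmem : Cj ∈ seq' := List.mem_iff_getElem?.mpr ⟨d, hg⟩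
      have hWvars : clauseVars W ⊆ clauseVars Cn := by
        refine clauseVars_subset ?_ ?_
        · rw [hCnEq]; exact hh
        · intro a ha
          have : a ∈ Cj.body := by
            rcases List.mem_append.mp ha with h' | h' <;> exact h'
          have : a ∈ D.body := hp.mem_iff.mpr (List.mem_append.mpr (Or.inl this))
          rw [hCnEq]
          exact List.mem_append.mpr (Or.inl this)
      refine ⟨seq' ++ [W], by simp [hlen], ?_, varsInv_extend hvars hCn' hWvars, ?_⟩
      · exact isDerivSeq_append hds (Or.inr (Or.inr ⟨trivial, Cj, hCjmem, Cj, hCjmem,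
          rfl, rfl⟩))
      · intro i Ci hi hCi
        rcases Nat.lt_succ_iff_lt_or_eq.mp hi with hi' | rfl
        · obtain ⟨d', hd', Cj', E', hg', hh', hp', hE'⟩ := hinv i Ci hi' hCi
          exact ⟨d', hd', Cj', E', hold _ hg', hh', hp', hE'⟩
        · obtain rfl : Cn = Ci := by rw [hCn] at hCi; injection hCi
          refine ⟨d, by omega, Cj, E ++ [e], hold _ hg, ?_, ?_, ?_⟩
          · rw [hCnEq]; exact hh
          · rw [hCnEq, ← List.append_assoc]
            exact hp.append_right [e]
          · refine EOk_append hE ?_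
            intro t e' ht
            obtain rfl : t = 0 := by
              have := (List.getElem?_eq_some_iff.mp ht).1; simpa using this
            obtain rfl : e = e' := by simpa using ht
            refine ⟨Y₁, Y₂, γ, rfl, ?_, ?_⟩
            · exact ⟨a1, by simpa using hp.mem_iff.mp ha1, ho1⟩
            · exact ⟨a2, by simpa using hp.mem_iff.mp ha2, ho2⟩
    · -- ρ₂ step
      obtain ⟨d₁, hd₁n, hD1g⟩ := mem_take_iff'.mp hD1
      obtain ⟨d₂, hd₂n, hD2g⟩ := mem_take_iff'.mp hD2
      obtain ⟨hheads, hCnEq⟩ := hρ2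
      obtain ⟨e₁, he₁, Cj₁, E₁, hg1, hh1, hp1, hE1⟩ := hinv d₁ D₁ hd₁n hD1g
      obtain ⟨e₂, he₂, Cj₂, E₂, hg2, hh2, hp2, hE2⟩ := hinv d₂ D₂ hd₂n hD2g
      set W : OClause P V G := ⟨Cj₁.head, Cj₁.body ++ Cj₂.body⟩ with hW_def
      have hCj1mem : Cj₁ ∈ seq' := List.mem_iff_getElem?.mpr ⟨e₁, hg1⟩
      have hCj2mem : Cj₂ ∈ seq' := List.mem_iff_getElem?.mpr ⟨e₂, hg2⟩
      have hWvars : clauseVars W ⊆ clauseVars Cn := by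
        refine clauseVars_subset ?_ ?_
        · rw [hCnEq]; exact hh1
        · intro a ha
          rw [hCnEq]
          rcases List.mem_append.mp ha with h' | h'
          · exact List.mem_append.mpr (Or.inl
              (hp1.mem_iff.mpr (List.mem_append.mpr (Or.inl h'))))
          · exact List.mem_append.mpr (Or.inr
              (hp2.mem_iff.mpr (List.mem_append.mpr (Or.inl h'))))
      refine ⟨seq' ++ [W], by simp [hlen], ?_, varsInv_extend hvars hCn' hWvars, ?_⟩
      · refine isDerivSeq_append hds (Or.inr (Or.inr ⟨trivial, Cj₁, hCj1mem, Cj₂,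
          hCj2mem, ?_, rfl⟩))
        rw [hh1, hh2]; exact hheads
      · intro i Ci hi hCi
        rcases Nat.lt_succ_iff_lt_or_eq.mp hi with hi' | rfl
        · obtain ⟨d', hd', Cj', E', hg', hh', hp', hE'⟩ := hinv i Ci hi' hCi
          exact ⟨d', hd', Cj', E', hold _ hg', hh', hp', hE'⟩
        · obtain rfl : Cn = Ci := by rw [hCn] at hCi; injection hCi
          refine ⟨seq'.length, by omega, W, E₁ ++ E₂, ?_, ?_, ?_, ?_⟩
          · rw [List.getElem?_concat_length]
          · rw [hCnEq]; exact hh1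
          · rw [hCnEq]
            exact ((hp1.append hp2).trans (perm_middle4 _ _ _ _))
          · refine EOk_append (EOk_mono hE1 ?_) (EOk_mono hE2 ?_)
            · intro a ha; exact List.mem_append.mpr (Or.inl ha)
            · intro a ha
              exact List.mem_append.mpr (Or.inl (List.mem_append.mpr (Or.inr ha)))

end Aux

/-- **Reordering Lemma.** If an ordered clause `⟨C⟩` is derivable from `Φ` using
`{ρ₁, ρ₂}`, then there are ordered clauses `⟨C_j⟩` derivable from `Φ` using `{ρ₂}`
only, and `⟨C_k⟩` derivable from `{⟨C_j⟩}` using `{ρ₁}` only, with `C_k ≡ C`. -/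
theorem reordering_lemma {P V G Γ : Type} (M : ModeDecls P Γ) (eqp : P) (X : V)
    (Φ : Set (OClause P V G)) (C : OClause P V G)
    (h : Derivable M eqp X Φ True True C) :
    ∃ Cj Ck : OClause P V G,
      Derivable M eqp X Φ False True Cj ∧
      Derivable M eqp X {Cj} True False Ck ∧
      ClauseEquiv eqp Ck C := by
  obtain ⟨seq, hseq, hlast⟩ := h
  have hne : seq ≠ [] := by rintro rfl; simp at hlast
  have hm : seq[seq.length - 1]? = some C := by
    rw [← List.getLast?_eq_getElem?]; exact hlast
  obtain ⟨seq', hlen', hds, hvars, hinv⟩ := key_invariant hseq seq.length le_rfl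
  have hlt : seq.length - 1 < seq.length :=
    Nat.sub_lt (List.length_pos_iff.mpr hne) one_pos
  obtain ⟨d, hd, Cj, E, hCj, hhead, hperm, hEOk⟩ := hinv (seq.length - 1) C hlt hm
  have hdlen : d < seq'.length := (List.getElem?_eq_some_iff.mp hCj).1
  refine ⟨Cj, ⟨Cj.head, Cj.body ++ E⟩, ?_, ?_, ?_⟩
  · -- (a) Cj derivable using ρ₂ only
    refine ⟨seq'.take (d + 1), isDerivSeq_take hds _, ?_⟩
    rw [List.getLast?_eq_getElem?, List.length_take,
      min_eq_left (by omega : d + 1 ≤ seq'.length)]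
    simpa [List.getElem?_take] using hCj
  · -- (b) Ck derivable from {Cj} using ρ₁ only
    set f : ℕ → OClause P V G := fun t => ⟨Cj.head, Cj.body ++ E.take t⟩ with hf
    set L : List (OClause P V G) := (List.range (E.length + 1)).map f with hL_def
    have hLlen : L.length = E.length + 1 := by simp [hL_def]
    have hL : ∀ i, i ≤ E.length → L[i]? = some (f i) := by
      intro i hi
      rw [hL_def, List.getElem?_map, List.getElem?_range (by omega)]
      rfl
    refine ⟨L, ?_, ?_⟩
    · intro i C' hC'
      have hilt : i < E.length + 1 := by
        have := (List.getElem?_eq_some_iff.mp hC').1; omega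
      have hC'' : C' = f i := by
        rw [hL i (by omega)] at hC'; injection hC'.symm
      cases i with
      | zero =>
        refine Or.inl ⟨Cj, rfl, Trm.var, ?_, ?_⟩
        · rw [hC'', substClause_id']
          show f 0 = Cj
          simp [hf]
        · intro v _ _ D hD
          simp at hD
      | succ t =>
        obtain ⟨e, he⟩ : ∃ e, E[t]? = some e := by
          rw [List.getElem?_eq_getElem (by omega)]; exact ⟨_, rfl⟩
        obtain ⟨Y₁, Y₂, γ, heq, w1, w2⟩ := hEOk t e he
        refine Or.inr (Or.inl ⟨trivial, f t, ?_, Y₁, Y₂, γ, w1, w2, ?_⟩)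
        · exact mem_take_iff'.mpr ⟨t, Nat.lt_succ_self t, hL t (by omega)⟩
        · rw [hC'', hf]
          show (⟨Cj.head, Cj.body ++ E.take (t + 1)⟩ : OClause P V G) = _
          rw [List.take_succ, he]
          simp [heq, List.append_assoc]
    · rw [List.getLast?_eq_getElem?, hLlen, Nat.add_sub_cancel,
        hL E.length le_rfl]
      simp [hf]
  · -- (c) equivalence
    refine clauseEquiv_of_mem eqp hhead ?_
    intro a
    exact (hperm.mem_iff (a := a)).symm

end CRM
end
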